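/- Let u, v be integers and r an odd positive integer, and let α₀, α₁, ..., α_r be integers with α_i ≠ 0 for 0 < i < r. If M = R_v^{α₀} L_u^{α₁} R_v^{α₂} ⋯ R_v^{α_{r-1}} L_u^{α_r} = [[a,b],[c,d]], then b/d = [vα₀, uα₁, vα₂, ..., vα_{r-1}], i.e., b/d equals the continued fraction with partial quotients vα₀, uα₁, ..., vα_{r-1}, provided u, v ≥ 2 so that all intermediate denominators are nonzero. -/

import Mathlib

abbrev SL2 := Matrix.SpecialLinearGroup (Fin 2) ℤ

/-- `L_u = [[1,0],[u,1]]`. -/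
def Lmat (u : ℤ) : SL2 :=
  ⟨!![1, 0; u, 1], by simp [Matrix.det_fin_two_of]⟩

/-- `R_v = [[1,v],[0,1]]`. -/
def Rmat (v : ℤ) : SL2 :=
  ⟨!![1, v; 0, 1], by simp [Matrix.det_fin_two_of]⟩

/-- The set `𝒢_{u,v}`. -/
def Gscr (u v : ℤ) : Set SL2 :=
  {M | ∃ n1 n2 n3 n4 : ℤ,
    (M : Matrix (Fin 2) (Fin 2) ℤ) = !![1 + u*v*n1, v*n2; u*n3, 1 + u*v*n4]}

/-- The group `G_{u,v}` generated by `L_u` and `R_v`. -/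
def Guv (u v : ℤ) : Subgroup SL2 := Subgroup.closure {Lmat u, Rmat v}

/-- Alternating product `R^{a₀} L^{a₁} R^{a₂} ⋯` from a list of exponents
(the boolean records whether the next factor is a power of `R`). -/
def altProd (u v : ℤ) : Bool → List ℤ → SL2
  | _, [] => 1
  | true, a :: l => (Rmat v) ^ a * altProd u v false l
  | false, a :: l => (Lmat u) ^ a * altProd u v true l

/-- Evaluation of a finite continued fraction `[q₀, q₁, …, q_r]`. -/
def E : List ℤ → ℚ
  | [] => 0
  | [q] => (q : ℚ)
  | q :: l => (q : ℚ) + 1 / E l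

/-! Right-multiplying by `L_u^{α_r}` leaves the second column `(b, d)` of `M` alone, and
left-multiplying by `R_w` or `L_w` acts on that column by `(x, y) ↦ (x + w y, y)` or
`(x, y) ↦ (x, y + w x)`. Reading the column top-down after an `R`-factor and bottom-up after
an `L`-factor, both become the continuant recurrence `(p, q) ↦ (w p + q, p)`, so `b` and `d`
are the numerator and denominator of `[vα₀, uα₁, …, vα_{r-1}]`. Since `|w| ≥ 2` for every partial
quotient but the first, the continuants grow strictly in absolute value, so no denominator
vanishes. -/

lemma zpow_eq_of_map_add {G : Type*} [Group G] (f : ℤ → G)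
    (hf : ∀ x y, f (x + y) = f x * f y) (v a : ℤ) : f v ^ a = f (v * a) := by
  let φ : Multiplicative ℤ →* G :=
    { toFun := fun x => f x.toAdd
      map_one' := by simpa using (hf 0 0).symm
      map_mul' := fun x y => hf x.toAdd y.toAdd }
  simpa [φ, mul_comm] using (map_zpow φ (Multiplicative.ofAdd v) a).symm

lemma Rmat_add (x y : ℤ) : Rmat (x + y) = Rmat x * Rmat y := by
  ext i j
  rw [Matrix.SpecialLinearGroup.coe_mul]
  fin_cases i <;> fin_cases j <;> simp [Rmat, Matrix.mul_apply, Fin.sum_univ_two, add_comm]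

lemma Lmat_add (x y : ℤ) : Lmat (x + y) = Lmat x * Lmat y := by
  ext i j
  rw [Matrix.SpecialLinearGroup.coe_mul]
  fin_cases i <;> fin_cases j <;> simp [Lmat, Matrix.mul_apply, Fin.sum_univ_two]

lemma Rmat_zpow (v a : ℤ) : Rmat v ^ a = Rmat (v * a) := zpow_eq_of_map_add Rmat Rmat_add v a

lemma Lmat_zpow (u a : ℤ) : Lmat u ^ a = Lmat (u * a) := zpow_eq_of_map_add Lmat Lmat_add u a

def col (N : SL2) : ℤ × ℤ :=
  ((N : Matrix (Fin 2) (Fin 2) ℤ) 0 1, (N : Matrix (Fin 2) (Fin 2) ℤ) 1 1)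

lemma col_Rmat_mul (w : ℤ) (N : SL2) :
    col (Rmat w * N) = ((col N).1 + w * (col N).2, (col N).2) := by
  simp only [col, Matrix.SpecialLinearGroup.coe_mul]
  simp [Rmat, Matrix.mul_apply, Fin.sum_univ_two]

lemma col_Lmat_mul (w : ℤ) (N : SL2) :
    col (Lmat w * N) = ((col N).1, (col N).2 + w * (col N).1) := by
  simp only [col, Matrix.SpecialLinearGroup.coe_mul]
  simp [Lmat, Matrix.mul_apply, Fin.sum_univ_two]
  ring

lemma col_mul_Lmat (N : SL2) (w : ℤ) : col (N * Lmat w) = col N := by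
  simp only [col, Matrix.SpecialLinearGroup.coe_mul]
  simp [Lmat, Matrix.mul_apply, Fin.sum_univ_two]

lemma altProd_append (u v : ℤ) (b : Bool) (l m : List ℤ) :
    altProd u v b (l ++ m) = altProd u v b l * altProd u v (if Even l.length then b else !b) m := by
  induction l generalizing b with
  | nil => simp [altProd]
  | cons a l ih =>
    cases b <;> by_cases h : Even l.length <;>
      simp [altProd, ih, h, mul_assoc, Nat.even_add_one]

def partialQuotients (u v : ℤ) : Bool → List ℤ → List ℤ
  | _, [] => []
  | true, a :: l => (v * a) :: partialQuotients u v false l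
  | false, a :: l => (u * a) :: partialQuotients u v true l

lemma partialQuotients_ofFn (u v : ℤ) (b : Bool) {n : ℕ} (f : Fin n → ℤ) :
    partialQuotients u v b (List.ofFn f) =
      List.ofFn (fun i => (if (i : ℕ) % 2 = 0 ↔ b then v else u) * f i) := by
  induction n generalizing b with
  | zero => simp [partialQuotients]
  | succ n ih =>
    rw [List.ofFn_succ, List.ofFn_succ]
    cases b <;> simp [partialQuotients, ih, Nat.succ_mod_two_eq_zero_iff]

/-- Numerator and denominator of `[q₀, …, q_s]` by the continuant recurrence; `[]` is `1/0`. -/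
def cfNumDen : List ℤ → ℤ × ℤ
  | [] => (1, 0)
  | q :: l => (q * (cfNumDen l).1 + (cfNumDen l).2, (cfNumDen l).1)

/-- For `b = false` the column is read bottom-up, which turns `L_u` into the action of `R_v`. -/
lemma col_altProd (u v : ℤ) (b : Bool) (l : List ℤ) (hl : Odd l.length ↔ b) :
    col (altProd u v b l) =
      if b then cfNumDen (partialQuotients u v b l)
      else (cfNumDen (partialQuotients u v b l)).swap := by
  induction l generalizing b with
  | nil =>
    obtain rfl : b = false := by simpa using hl.symm
    rfl
  | cons a l ih =>
    cases b
    · have hcol := ih true (by simpa [Nat.odd_add_one] using hl)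
      simp [altProd, partialQuotients, Lmat_zpow, col_Lmat_mul, cfNumDen, hcol, add_comm]
    · have hcol := ih false (by simpa [Nat.odd_add_one] using hl)
      simp [altProd, partialQuotients, Rmat_zpow, col_Rmat_mul, cfNumDen, hcol, add_comm]

lemma abs_lt_abs_mul_add {q n d : ℤ} (hq : 2 ≤ |q|) (hd : |d| < |n|) : |n| < |q * n + d| := by
  have htri : |q * n| ≤ |q * n + d| + |d| := by simpa using abs_add_le (q * n + d) (-d)
  rw [abs_mul] at htri
  nlinarith [abs_nonneg n]

lemma abs_snd_lt_abs_fst_cfNumDen {l : List ℤ} (hl : ∀ q ∈ l, 2 ≤ |q|) :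
    |(cfNumDen l).2| < |(cfNumDen l).1| := by
  induction l with
  | nil => simp [cfNumDen]
  | cons q l ih =>
    exact abs_lt_abs_mul_add (hl q List.mem_cons_self)
      (ih fun p hp => hl p (List.mem_cons_of_mem q hp))

-- also for `l = []`, as `E [] = 0` and `1 / 0 = 0`
lemma E_cons (q : ℤ) (l : List ℤ) : E (q :: l) = q + 1 / E l := by
  cases l <;> simp [E]

lemma E_cons_eq_cfNumDen (q : ℤ) {l : List ℤ} (hl : ∀ p ∈ l, 2 ≤ |p|) :
    E (q :: l) = (cfNumDen (q :: l)).1 / (cfNumDen (q :: l)).2 := by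
  induction l generalizing q with
  | nil => simp [E, cfNumDen]
  | cons p l ih =>
    have hnum : (cfNumDen (p :: l)).1 ≠ 0 :=
      abs_pos.mp ((abs_nonneg _).trans_lt (abs_snd_lt_abs_fst_cfNumDen hl))
    rw [E_cons, ih p fun p' hp' => hl p' (List.mem_cons_of_mem p hp'), one_div_div]
    simp only [cfNumDen] at hnum ⊢
    field_simp
    push_cast
    ring

lemma two_le_abs_mul {c a : ℤ} (hc : 2 ≤ c) (ha : a ≠ 0) : 2 ≤ |c * a| := by
  rw [abs_mul, abs_of_nonneg (by linarith : (0 : ℤ) ≤ c)]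
  nlinarith [Int.one_le_abs ha]

lemma col_altProd_append_singleton (u v : ℤ) {l : List ℤ} (hl : Odd l.length) (a : ℤ) :
    col (altProd u v true (l ++ [a])) = col (altProd u v true l) := by
  simp [altProd_append, Nat.not_even_iff_odd.mpr hl, altProd, Lmat_zpow, col_mul_Lmat]

theorem ratio_eq_cf (u v : ℤ) (hu : 2 ≤ u) (hv : 2 ≤ v) (r : ℕ) (hr : Odd r)
    (α : ℕ → ℤ) (hα : ∀ i, 0 < i → i < r → α i ≠ 0)
    (M : SL2) (hM : M = altProd u v true (List.ofFn (fun i : Fin (r + 1) => α i))) :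
    (((M : Matrix (Fin 2) (Fin 2) ℤ) 0 1 : ℚ)) / (((M : Matrix (Fin 2) (Fin 2) ℤ) 1 1 : ℚ)) =
      E (List.ofFn (fun i : Fin r => (if (i : ℕ) % 2 = 0 then v else u) * α i)) := by
  subst hM
  obtain ⟨m, rfl⟩ : ∃ m, r = m + 1 := ⟨r - 1, by have := hr.pos; omega⟩
  have hodd : Odd (List.ofFn fun i : Fin (m + 1) => α i).length := by simpa using hr
  have hsplit : List.ofFn (fun i : Fin (m + 1 + 1) => α i) =
      List.ofFn (fun i : Fin (m + 1) => α i) ++ [α (m + 1)] := by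
    rw [List.ofFn_succ', List.concat_eq_append]
    rfl
  have hquot : ∀ q ∈ List.ofFn
      (fun i : Fin m => (if ((i : ℕ) + 1) % 2 = 0 then v else u) * α (i + 1)), 2 ≤ |q| := by
    simp only [List.mem_ofFn, forall_exists_index]
    rintro _ i rfl
    have hαi := hα (i + 1) i.succ_pos (by omega)
    split_ifs
    exacts [two_le_abs_mul hv hαi, two_le_abs_mul hu hαi]
  change ((col _).1 : ℚ) / (col _).2 = _
  rw [hsplit, col_altProd_append_singleton u v hodd, col_altProd u v true _ (iff_of_true hodd rfl),
    partialQuotients_ofFn, List.ofFn_succ, List.ofFn_succ]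
  simp only [if_true, iff_true, Fin.val_succ]
  exact (E_cons_eq_cfNumDen _ hquot).symm
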